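/- Let L be a lattice with stable nestable set G, and let f ∈ G. Suppose N₁ ⊆ G^{⌈f⌉} := {g ∈ G : g ≤ f} is a nested set (w.r.t. G) with f ∈ N₁, and N₂ ⊆ G^{⌊f⌋} := {g ∈ G : g > f or g ∨ f ∉ G} is a nested set with respect to G^{⌊f⌋} (i.e., the join of any ≥ 2 pairwise incomparable elements of N₂ is not in G^{⌊f⌋}). Then N₁ ∪ N₂ is a nested set with respect to G. -/
import Mathlib

section aux

def Nestable' {L : Type*} [Lattice L] [BoundedOrder L] (G : Set L) : Prop :=
  (∀ g ∈ G, ⊥ < g) ∧ (⊤ : L) ∈ G ∧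
    ∀ f ∈ G, ∀ g ∈ G, ¬ f ≤ g → ¬ g ≤ f → f ⊔ g ∉ G → f ⊓ g = ⊥

lemma upstream {L : Type*} [Lattice L] [BoundedOrder L]
    {G : Set L} (hG : Nestable' G) {x y z : L}
    (hxy : x ⊔ y ∉ G) (hy : y ∈ G) (hz : z ≤ y) (hz0 : ⊥ < z) :
    x ⊔ z ∉ G := by
  intro hx
  by_cases h1 : x ⊔ z ≤ y
  · exact hxy (by rwa [sup_eq_right.2 (le_trans le_sup_left h1)])
  by_cases h2 : y ≤ x ⊔ z
  · have h : x ⊔ y = x ⊔ z := le_antisymm (sup_le le_sup_left h2) (sup_le_sup_left hz x)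
    exact hxy (h ▸ hx)
  have hmeet := hG.2.2 (x ⊔ z) hx y hy h1 h2
    (by rwa [sup_assoc, sup_eq_right.2 hz])
  have h : z ≤ (x ⊔ z) ⊓ y := le_inf le_sup_right hz
  rw [hmeet, le_bot_iff] at h
  exact hz0.ne' h

end aux


def Nestable {L : Type*} [Lattice L] [BoundedOrder L] (G : Set L) : Prop :=
  (∀ g ∈ G, ⊥ < g) ∧ (⊤ : L) ∈ G ∧
    ∀ f ∈ G, ∀ g ∈ G, ¬ f ≤ g → ¬ g ≤ f → f ⊔ g ∉ G → f ⊓ g = ⊥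

def Stable {L : Type*} [Lattice L] [BoundedOrder L] (G : Set L) : Prop :=
  ∀ f ∈ G, ∀ s : Finset L, s.Nonempty → ↑s ⊆ G →
    (∀ g ∈ s, f ⊔ g ∉ G) → f ⊔ s.sup id ∉ G

/-- `N` is nested with respect to a collection `G'`: `N ⊆ G'` and the join of any
`≥ 2` pairwise incomparable elements of `N` does not lie in `G'`. -/
def Nested {L : Type*} [Lattice L] [BoundedOrder L] (G' N : Set L) : Prop :=
  N ⊆ G' ∧ ∀ s : Finset L, ↑s ⊆ N → 2 ≤ s.card →
    (∀ f ∈ s, ∀ g ∈ s, f ≠ g → ¬ f ≤ g) → s.sup id ∉ G'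

/-- If `N₁ ⊆ G^{⌈f⌉}` is `G`-nested containing `f`, and `N₂` is nested with respect
to `G^{⌊f⌋}`, then `N₁ ∪ N₂` is `G`-nested. -/
theorem union_nested {L : Type*} [Lattice L] [BoundedOrder L] [Finite L]
    {G : Set L} (hG : Nestable G) (hst : Stable G) {f : L} (hf : f ∈ G)
    {N₁ N₂ : Set L}
    (hN₁ : Nested G N₁) (hN₁sub : N₁ ⊆ {g ∈ G | g ≤ f}) (hfN₁ : f ∈ N₁)
    (hN₂ : Nested {g ∈ G | f < g ∨ g ⊔ f ∉ G} N₂) :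
    Nested G (N₁ ∪ N₂) := by
  classical
  have hG' : Nestable' G := hG
  have hN₂G' : N₂ ⊆ {g ∈ G | f < g ∨ g ⊔ f ∉ G} := hN₂.1
  constructor
  · rintro g (hg | hg)
    · exact hN₁.1 hg
    · exact (hN₂G' hg).1
  intro s hs hcard hanti
  set s₁ : Finset L := s.filter (· ∈ N₁) with hs₁def
  set s₂ : Finset L := s.filter (· ∉ N₁) with hs₂def
  have hs₂N₂ : ∀ g ∈ s₂, g ∈ N₂ := by
    intro g hg
    rw [hs₂def, Finset.mem_filter] at hg
    rcases hs hg.1 with h | h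
    · exact absurd h hg.2
    · exact h
  by_cases h₂e : s₂ = ∅
  · -- all of s in N₁
    have hsub : ↑s ⊆ N₁ := by
      intro g hg
      by_contra hgN
      exact (Finset.eq_empty_iff_forall_notMem.1 h₂e g)
        (by rw [hs₂def, Finset.mem_filter]; exact ⟨hg, hgN⟩)
    exact hN₁.2 s hsub hcard hanti
  by_cases h₁e : s₁ = ∅
  · -- all of s in N₂
    have hsub : ↑s ⊆ N₂ := by
      intro g hg
      apply hs₂N₂
      rw [hs₂def, Finset.mem_filter]
      refine ⟨hg, fun hgN => ?_⟩
      exact (Finset.eq_empty_iff_forall_notMem.1 h₁e g)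
        (by rw [hs₁def, Finset.mem_filter]; exact ⟨hg, hgN⟩)
    have hkey := hN₂.2 s hsub hcard hanti
    intro hsupG
    apply hkey
    refine ⟨hsupG, ?_⟩
    by_cases hex : ∃ b ∈ s, f < b
    · obtain ⟨b, hb, hfb⟩ := hex
      exact Or.inl (lt_of_lt_of_le hfb (Finset.le_sup (f := id) hb))
    · push_neg at hex
      refine Or.inr ?_
      rw [sup_comm]
      apply hst f hf s (Finset.card_pos.1 (by omega)) (fun g hg => (hN₂G' (hsub hg)).1)
      intro g hg
      rcases (hN₂G' (hsub hg)).2 with h | h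
      · exact absurd h (hex g hg)
      · rwa [sup_comm]
  -- both nonempty
  obtain ⟨a, ha⟩ := Finset.nonempty_iff_ne_empty.2 h₁e
  obtain ⟨b₀, hb₀⟩ := Finset.nonempty_iff_ne_empty.2 h₂e
  have haN₁ : a ∈ N₁ := (Finset.mem_filter.1 ha).2
  have has : a ∈ s := (Finset.mem_filter.1 ha).1
  have haf : a ≤ f := (hN₁sub haN₁).2
  have hbf : ∀ b ∈ s₂, b ⊔ f ∉ G := by
    intro b hb
    rcases (hN₂G' (hs₂N₂ b hb)).2 with h | h
    · exfalso
      have hbs : b ∈ s := (Finset.mem_filter.1 hb).1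
      have hab : a ≤ b := le_of_lt (lt_of_le_of_lt haf h)
      have hne : a ≠ b := fun he => absurd (he ▸ haf : b ≤ f) h.not_ge
      exact hanti a has b hbs hne hab
    · exact h
  -- f ⊔ sup s₂ ∉ G by stability
  have hfs₂ : f ⊔ s₂.sup id ∉ G := by
    apply hst f hf s₂ ⟨b₀, hb₀⟩ (fun g hg => (hN₂G' (hs₂N₂ g hg)).1)
    intro g hg
    rw [sup_comm]
    exact hbf g hg
  -- sup s₁ ≤ f and ⊥ < sup s₁
  have hA : s₁.sup id ≤ f := by
    apply Finset.sup_le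
    intro g hg
    exact (hN₁sub (Finset.mem_filter.1 hg).2).2
  have hA0 : ⊥ < s₁.sup id :=
    lt_of_lt_of_le (hG.1 a (hN₁.1 haN₁)) (Finset.le_sup (f := id) ha)
  have hmain : s₂.sup id ⊔ s₁.sup id ∉ G := by
    apply upstream hG' _ hf hA hA0
    rwa [sup_comm]
  have hsplit : s.sup id = s₁.sup id ⊔ s₂.sup id := by
    conv_lhs => rw [← Finset.filter_union_filter_not_eq (· ∈ N₁) s]
    exact Finset.sup_union
  rw [hsplit, sup_comm]
  exact hmain
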